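/- arXiv:2102.08883 — 8 statements merged into one kernel-verified Lean document; each statement's English description precedes it below -/
import Mathlib

section
/- Let X be a normed space and let (x_k) be a sequence in X. If a series ∑_k x_k is weakly unconditionally Cauchy (i.e., ∑_k |x*(x_k)| < ∞ for every continuous linear functional x* on X), then there exists a constant H > 0 such that for every n and every choice of scalars a_1, ..., a_n with |a_k| ≤ 1, one has ‖∑_{k=1}^n a_k x_k‖ ≤ H. -/
open Finset

/-!
The vectors `∑_{k<n} a k • x k` with `|a k| ≤ 1` are weakly bounded: a functional `φ` sends each
of them to a number of size at most `∑' k, |φ (x k)|`. Viewed in the bidual, they form a pointwise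
bounded family of functionals on the Banach space `X*`, so Banach–Steinhaus bounds their norms,
which are their norms in `X` because the embedding into the bidual is isometric.
-/

section WeaklyBounded

variable {𝕜 X : Type*} [RCLike 𝕜] [SeminormedAddCommGroup X] [NormedSpace 𝕜 X]

theorem exists_norm_le_of_forall_exists_norm_apply_le {ι : Type*} {y : ι → X}
    (h : ∀ φ : StrongDual 𝕜 X, ∃ C, ∀ i, ‖φ (y i)‖ ≤ C) : ∃ C, ∀ i, ‖y i‖ ≤ C := by
  obtain ⟨C, hC⟩ := banach_steinhaus (g := fun i => NormedSpace.inclusionInDoubleDual 𝕜 X (y i)) h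
  exact ⟨C, fun i => (NormedSpace.inclusionInDoubleDualLi 𝕜).norm_map (y i) ▸ hC i⟩

theorem norm_apply_sum_smul_le_tsum {x : ℕ → X} {φ : StrongDual 𝕜 X}
    (hφ : Summable fun k => ‖φ (x k)‖) (s : Finset ℕ) {a : ℕ → 𝕜} (ha : ∀ k, ‖a k‖ ≤ 1) :
    ‖φ (∑ k ∈ s, a k • x k)‖ ≤ ∑' k, ‖φ (x k)‖ :=
  calc ‖φ (∑ k ∈ s, a k • x k)‖ = ‖∑ k ∈ s, a k * φ (x k)‖ := by simp
    _ ≤ ∑ k ∈ s, ‖a k * φ (x k)‖ := norm_sum_le _ _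
    _ ≤ ∑ k ∈ s, ‖φ (x k)‖ := sum_le_sum fun k _ => by
        rw [norm_mul]
        exact mul_le_of_le_one_left (norm_nonneg _) (ha k)
    _ ≤ ∑' k, ‖φ (x k)‖ := hφ.sum_le_tsum s fun k _ => norm_nonneg _

end WeaklyBounded

/-- If a series in a normed space is weakly unconditionally Cauchy, then the
partial sums with multipliers from the unit ball are uniformly bounded. -/
theorem wuC_uniform_bound {X : Type*} [NormedAddCommGroup X] [NormedSpace ℝ X]
    (x : ℕ → X) (hwuC : ∀ φ : X →L[ℝ] ℝ, Summable fun k => |φ (x k)|) :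
    ∃ H > 0, ∀ n : ℕ, ∀ a : ℕ → ℝ, (∀ k, |a k| ≤ 1) →
      ‖∑ k ∈ Finset.range n, a k • x k‖ ≤ H := by
  let y : ℕ × {a : ℕ → ℝ // ∀ k, |a k| ≤ 1} → X := fun p => ∑ k ∈ range p.1, p.2.1 k • x k
  obtain ⟨C, hC⟩ := exists_norm_le_of_forall_exists_norm_apply_le (𝕜 := ℝ) (y := y) fun φ =>
    ⟨_, fun p => norm_apply_sum_smul_le_tsum (by simpa using hwuC φ) _ (by simpa using p.2.2)⟩
  exact ⟨max C 1, by positivity, fun n a ha => (hC (n, ⟨a, ha⟩)).trans (le_max_left _ _)⟩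
end

section
/- Let X be a Banach space and let ∑_k x_k be a formal series in X. The series ∑_k x_k is weakly unconditionally Cauchy if and only if for every null scalar sequence (t_k) (i.e., t_k → 0) the series ∑_k t_k x_k converges in X. -/
open Filter Finset Topology

/-!
If `∑ |φ (x k)| < ∞` for every functional `φ`, the uniform boundedness principle (applied in the
bidual) bounds all sums `∑ k ∈ F, s k • x k` with `|s k| ≤ 1` by one constant `C`. Hence when
`t k → 0`, every finite block of `∑ t k • x k` far enough out has norm at most `C * sup |t k|`,
and the series even converges unconditionally.

Conversely, if `∑ |a k| = ∞` with partial sums `S n`, the multipliers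
`t k = sign (a k) / √(1 + S (k + 1))` tend to `0`, while `t k * a k ≥ √(1 + S (k + 1)) - √(1 + S k)`
telescopes to infinity. Taking `a k = φ (x k)` contradicts the convergence of `∑ t k • x k`.
-/

section WeaklyBounded

variable {𝕜 E : Type*} [RCLike 𝕜] [SeminormedAddCommGroup E] [NormedSpace 𝕜 E]

theorem exists_norm_le_of_forall_exists_norm_dual_le {ι : Type*} {v : ι → E}
    (h : ∀ φ : StrongDual 𝕜 E, ∃ C, ∀ i, ‖φ (v i)‖ ≤ C) : ∃ C, ∀ i, ‖v i‖ ≤ C := by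
  obtain ⟨C, hC⟩ := banach_steinhaus (g := fun i => NormedSpace.inclusionInDoubleDual 𝕜 E (v i)) h
  exact ⟨C, fun i => (NormedSpace.inclusionInDoubleDualLi 𝕜).norm_map (v i) ▸ hC i⟩

end WeaklyBounded

section WeaklyUnconditionallyCauchy

variable {ι X : Type*} [NormedAddCommGroup X] [NormedSpace ℝ X] {x : ι → X}

theorem exists_norm_sum_smul_le_of_summable_abs (h : ∀ φ : X →L[ℝ] ℝ, Summable fun k => |φ (x k)|) :
    ∃ C, ∀ (F : Finset ι) (s : ι → ℝ), (∀ k ∈ F, |s k| ≤ 1) → ‖∑ k ∈ F, s k • x k‖ ≤ C := by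
  let P := {p : Finset ι × (ι → ℝ) // ∀ k ∈ p.1, |p.2 k| ≤ 1}
  obtain ⟨C, hC⟩ := exists_norm_le_of_forall_exists_norm_dual_le
    (v := fun p : P => ∑ k ∈ p.1.1, p.1.2 k • x k) fun φ => by
      refine ⟨∑' k, |φ (x k)|, fun ⟨⟨F, s⟩, hs⟩ => ?_⟩
      calc ‖φ (∑ k ∈ F, s k • x k)‖ = |∑ k ∈ F, s k * φ (x k)| := by simp
        _ ≤ ∑ k ∈ F, |s k| * |φ (x k)| := by
          simpa only [abs_mul] using abs_sum_le_sum_abs (fun k => s k * φ (x k)) F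
        _ ≤ ∑ k ∈ F, |φ (x k)| :=
          sum_le_sum fun k hk => mul_le_of_le_one_left (abs_nonneg _) (hs k hk)
        _ ≤ ∑' k, |φ (x k)| := (h φ).sum_le_tsum _ fun k _ => abs_nonneg _
  exact ⟨C, fun F s hs => hC ⟨(F, s), hs⟩⟩

theorem summable_smul_of_summable_abs [CompleteSpace X]
    (h : ∀ φ : X →L[ℝ] ℝ, Summable fun k => |φ (x k)|) {t : ι → ℝ}
    (ht : Tendsto t cofinite (𝓝 0)) : Summable fun k => t k • x k := by
  obtain ⟨C, hC⟩ := exists_norm_sum_smul_le_of_summable_abs h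
  have hC0 : 0 ≤ C := by simpa using hC ∅ 0
  refine summable_iff_vanishing_norm.2 fun ε hε => ?_
  set r := ε / (C + 1)
  have hr : 0 < r := by positivity
  have hsmall : {k | ¬|t k| < r}.Finite := eventually_cofinite.1 <|
    (tendsto_zero_iff_abs_tendsto_zero t).1 ht |>.eventually (gt_mem_nhds hr)
  refine ⟨hsmall.toFinset, fun F hF => ?_⟩
  have hs : ∀ k ∈ F, |t k / r| ≤ 1 := fun k hk => by
    have : |t k| < r := by
      by_contra hk'
      exact Finset.disjoint_left.1 hF hk (hsmall.mem_toFinset.2 hk')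
    rw [abs_div, abs_of_pos hr, div_le_one hr]
    exact this.le
  calc ‖∑ k ∈ F, t k • x k‖ = ‖r • ∑ k ∈ F, (t k / r) • x k‖ := by
        simp only [smul_sum, smul_smul, mul_div_cancel₀ _ hr.ne']
    _ = r * ‖∑ k ∈ F, (t k / r) • x k‖ := by rw [norm_smul, Real.norm_of_nonneg hr.le]
    _ ≤ r * C := by gcongr; exact hC F _ hs
    _ < ε := by
        rw [div_mul_eq_mul_div, div_lt_iff₀ (by positivity)]
        nlinarith

end WeaklyUnconditionallyCauchy

section AbelDini

theorem Real.sqrt_sub_sqrt_le_sub_div_sqrt {a b : ℝ} (ha : 0 ≤ a) (hab : a ≤ b) :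
    √b - √a ≤ (b - a) / √b := by
  rcases (ha.trans hab).eq_or_lt with hb | hb
  · obtain rfl : a = 0 := le_antisymm (hb ▸ hab) ha
    simp [← hb]
  rw [le_div_iff₀ (Real.sqrt_pos.2 hb)]
  nlinarith [Real.sq_sqrt ha, Real.sq_sqrt hb.le, Real.sqrt_le_sqrt hab, Real.sqrt_nonneg a]

theorem tendsto_sum_div_sqrt_one_add_sum_range_atTop {u : ℕ → ℝ} (hu : ∀ k, 0 ≤ u k)
    (hS : Tendsto (fun n => ∑ k ∈ range n, u k) atTop atTop) :
    Tendsto (fun n => ∑ k ∈ range n, u k / √(1 + ∑ j ∈ range (k + 1), u j)) atTop atTop := by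
  set S : ℕ → ℝ := fun n => ∑ k ∈ range n, u k
  have hstep (k : ℕ) : √(1 + S (k + 1)) - √(1 + S k) ≤ u k / √(1 + S (k + 1)) := by
    have hSk : 0 ≤ S k := sum_nonneg fun j _ => hu j
    have hSsucc : S (k + 1) = S k + u k := sum_range_succ u k
    simpa [hSsucc] using Real.sqrt_sub_sqrt_le_sub_div_sqrt (a := 1 + S k) (b := 1 + S (k + 1))
      (by positivity) (by linarith [hu k])
  have hlower (n : ℕ) : √(1 + S n) - 1 ≤ ∑ k ∈ range n, u k / √(1 + S (k + 1)) :=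
    calc √(1 + S n) - 1 = ∑ k ∈ range n, (√(1 + S (k + 1)) - √(1 + S k)) := by
          rw [sum_range_sub (fun n => √(1 + S n))]; simp [S]
      _ ≤ _ := sum_le_sum fun k _ => hstep k
  exact tendsto_atTop_mono hlower <| tendsto_atTop_add_const_right _ _ <|
    Real.tendsto_sqrt_atTop.comp (tendsto_atTop_add_const_left _ _ hS)

theorem exists_tendsto_zero_tendsto_sum_mul_atTop {a : ℕ → ℝ} (ha : ¬Summable fun k => |a k|) :
    ∃ t : ℕ → ℝ, Tendsto t atTop (𝓝 0) ∧
      Tendsto (fun n => ∑ k ∈ range n, t k * a k) atTop atTop := by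
  have hS := (not_summable_iff_tendsto_nat_atTop_of_nonneg fun k => abs_nonneg (a k)).1 ha
  set w : ℕ → ℝ := fun k => (√(1 + ∑ j ∈ range (k + 1), |a j|))⁻¹
  have hw : Tendsto w atTop (𝓝 0) := tendsto_inv_atTop_zero.comp <| Real.tendsto_sqrt_atTop.comp <|
    tendsto_atTop_add_const_left _ _ (hS.comp (tendsto_add_atTop_nat 1))
  refine ⟨fun k => SignType.sign (a k) * w k, squeeze_zero_norm (fun k => ?_) hw, ?_⟩
  · rw [norm_mul, Real.norm_of_nonneg (inv_nonneg.2 (Real.sqrt_nonneg _))]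
    refine mul_le_of_le_one_left (inv_nonneg.2 (Real.sqrt_nonneg _)) ?_
    rcases SignType.sign (a k) with _ | _ | _ <;> simp
  · convert tendsto_sum_div_sqrt_one_add_sum_range_atTop (fun k => abs_nonneg (a k)) hS using 3
    rw [mul_right_comm, sign_mul_self, div_eq_mul_inv]

end AbelDini

/-- In a Banach space, a series is weakly unconditionally Cauchy iff it is
`c₀`-multiplier convergent. -/
theorem wuC_iff_c0_multiplier_convergent
    {X : Type*} [NormedAddCommGroup X] [NormedSpace ℝ X] [CompleteSpace X] (x : ℕ → X) :
    (∀ φ : X →L[ℝ] ℝ, Summable fun k => |φ (x k)|) ↔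
    (∀ t : ℕ → ℝ, Tendsto t atTop (𝓝 0) → ∃ y : X,
        Tendsto (fun n => ∑ k ∈ Finset.range n, t k • x k) atTop (𝓝 y)) := by
  refine ⟨fun h t ht => ?_, fun h φ => ?_⟩
  · rw [← Nat.cofinite_eq_atTop] at ht
    exact ⟨_, (summable_smul_of_summable_abs h ht).hasSum.tendsto_sum_nat⟩
  · by_contra hφ
    obtain ⟨t, ht, htop⟩ := exists_tendsto_zero_tendsto_sum_mul_atTop hφ
    obtain ⟨y, hy⟩ := h t ht
    refine not_tendsto_nhds_of_tendsto_atTop htop (φ y) ?_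
    simpa [Function.comp_def] using (φ.continuous.tendsto y).comp hy
end

section
/- Let X and Y be Banach spaces and T_k ∈ B(X,Y) for all k. If the series ∑_k T_k is c_0(X)-multiplier convergent (i.e., ∑_k T_k x_k converges in Y for every null sequence (x_k) in X), then the space M^∞_R(∑_k T_k) = { x = (x_k) ∈ ℓ_∞(X) : ∑_k T_k x_k is Riesz convergent in Y }, equipped with the sup norm ‖x‖ = sup_k ‖x_k‖, is a Banach space. -/
open Filter Finset Topology BoundedContinuousFunction

/-- A series `∑ s k` is Riesz convergent to `l` (w.r.t. weights `r`) if the Riesz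
means of its partial sums converge in norm to `l`. -/
def RieszSeriesConvTo {Y : Type*} [NormedAddCommGroup Y] [NormedSpace ℝ Y]
    (r : ℕ → ℝ) (s : ℕ → Y) (l : Y) : Prop :=
  Tendsto (fun n => (∑ k ∈ Finset.range (n + 1), r k)⁻¹ •
      ∑ k ∈ Finset.range (n + 1), r k • (∑ j ∈ Finset.range (k + 1), s j))
    atTop (𝓝 l)

/-!
The Riesz means of `∑ T k x k` are convex combinations of the partial sum operators
`S n x = ∑_{k<n} T k x k`. By the uniform boundedness principle on the Banach space `c₀(X)`,
multiplier convergence makes the `S n` uniformly bounded on `c₀(X)`, hence also on `ℓ_∞(X)`,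
because `S n x` only depends on the first `n` terms of `x`. So the Riesz mean operators are an
equicontinuous family on `ℓ_∞(X)`, and the set where such a family is pointwise Cauchy is closed.
-/

theorem Equicontinuous.isClosed_setOf_cauchy_map {ι E α : Type*} [TopologicalSpace E]
    [UniformSpace α] {l : Filter ι} [l.NeBot] {F : ι → E → α} (hF : Equicontinuous F) :
    IsClosed {x | Cauchy (l.map (F · x))} := by
  refine closure_subset_iff_isClosed.mp fun x hx => ?_
  rw [Set.mem_ofPred_eq, cauchy_map_iff']
  intro U hU
  rw [Filter.mem_map]
  obtain ⟨V, hV, hVsymm, hVU⟩ := comp_comp_symm_mem_uniformity_sets hU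
  obtain ⟨z, hxz, hz⟩ := mem_closure_iff_nhds.mp hx _ (hF x V hV)
  filter_upwards [cauchy_map_iff'.mp hz hV] with p hp
  exact hVU ⟨_, ⟨_, hxz p.1, hp⟩, hVsymm.symm _ _ (hxz p.2)⟩

theorem Finset.norm_centerMass_le {ι E : Type*} [SeminormedAddCommGroup E] [NormedSpace ℝ E]
    {s : Finset ι} {w : ι → ℝ} {z : ι → E} {M : ℝ} (hw : ∀ i ∈ s, 0 ≤ w i) (hM : 0 ≤ M)
    (hz : ∀ i ∈ s, ‖z i‖ ≤ M) : ‖s.centerMass w z‖ ≤ M := by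
  rcases (Finset.sum_nonneg hw).eq_or_lt with hw0 | hwpos
  · simpa [Finset.centerMass, ← hw0] using hM
  · simpa using (convex_closedBall (0 : E) M).centerMass_mem hw hwpos (by simpa using hz)

open scoped ZeroAtInfty

namespace ZeroAtInftyContinuousMap

variable {α E : Type*} (𝕜 : Type*) [TopologicalSpace α] [NormedField 𝕜] [NormedAddCommGroup E]
  [NormedSpace 𝕜 E]

noncomputable def toBCFCLM : C₀(α, E) →L[𝕜] α →ᵇ E :=
  LinearMap.mkContinuous
    { toFun := toBCF, map_add' := fun _ _ => rfl, map_smul' := fun _ _ => rfl } 1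
    fun f => (one_mul ‖f‖).symm ▸ norm_toBCF_eq_norm.le

@[simp] theorem toBCFCLM_apply (f : C₀(α, E)) : toBCFCLM 𝕜 f = f.toBCF := rfl

end ZeroAtInftyContinuousMap

open ZeroAtInftyContinuousMap

namespace BoundedContinuousFunction

variable {X : Type*} [NormedAddCommGroup X]

noncomputable def truncate (f : ℕ →ᵇ X) (n : ℕ) : C₀(ℕ, X) where
  toFun k := if k < n then f k else 0
  continuous_toFun := continuous_of_discreteTopology
  zero_at_infty' := by
    rw [cocompact_eq_atTop]
    refine tendsto_nhds_of_eventually_eq ?_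
    filter_upwards [eventually_ge_atTop n] with k hk
    exact if_neg (not_lt.2 hk)

theorem truncate_apply_of_lt (f : ℕ →ᵇ X) {n k : ℕ} (hk : k < n) :
    f.truncate n k = f k :=
  if_pos hk

theorem norm_truncate_le (f : ℕ →ᵇ X) (n : ℕ) :
    ‖f.truncate n‖ ≤ ‖f‖ := by
  rw [← norm_toBCF_eq_norm]
  refine (norm_le (norm_nonneg f)).2 fun k => ?_
  change ‖(if k < n then f k else 0 : X)‖ ≤ ‖f‖
  split
  · exact f.norm_coe_le_norm k
  · simp

end BoundedContinuousFunction

section Multipliers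

variable {X Y : Type*} [NormedAddCommGroup X] [NormedSpace ℝ X]
  [NormedAddCommGroup Y] [NormedSpace ℝ Y]

noncomputable def partialSumCLM (T : ℕ → X →L[ℝ] Y) (n : ℕ) : (ℕ →ᵇ X) →L[ℝ] Y :=
  ∑ k ∈ range n, (T k).comp (evalCLM ℝ k)

@[simp] theorem partialSumCLM_apply (T : ℕ → X →L[ℝ] Y) (n : ℕ) (f : ℕ →ᵇ X) :
    partialSumCLM T n f = ∑ k ∈ range n, T k (f k) := by
  simp [partialSumCLM]

theorem partialSumCLM_truncate (T : ℕ → X →L[ℝ] Y) (n : ℕ) (f : ℕ →ᵇ X) :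
    partialSumCLM T n (f.truncate n).toBCF = partialSumCLM T n f := by
  simp only [partialSumCLM_apply]
  exact sum_congr rfl fun k hk => by
    rw [toBCF_apply, f.truncate_apply_of_lt (mem_range.1 hk)]

theorem exists_norm_partialSumCLM_le [CompleteSpace X] (T : ℕ → X →L[ℝ] Y)
    (hT : ∀ x : ℕ → X, Tendsto x atTop (𝓝 0) →
      BddAbove (Set.range fun n => ‖∑ k ∈ range n, T k (x k)‖)) :
    ∃ C, ∀ n, ‖partialSumCLM T n‖ ≤ C := by
  obtain ⟨C, hC⟩ : ∃ C, ∀ n, ‖(partialSumCLM T n).comp (toBCFCLM ℝ)‖ ≤ C := by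
    refine banach_steinhaus fun f => ?_
    have hf : Tendsto (⇑f) atTop (𝓝 0) := by
      simpa [cocompact_eq_atTop] using zero_at_infty f
    obtain ⟨C, hC⟩ := hT f hf
    exact ⟨C, fun n => by simpa using hC (Set.mem_range_self n)⟩
  have hC0 : 0 ≤ C := (ContinuousLinearMap.opNorm_nonneg _).trans (hC 0)
  refine ⟨C, fun n => ContinuousLinearMap.opNorm_le_bound _ hC0 fun f => ?_⟩
  calc ‖partialSumCLM T n f‖
        = ‖(partialSumCLM T n).comp (toBCFCLM ℝ) (f.truncate n)‖ := by
        rw [ContinuousLinearMap.comp_apply, toBCFCLM_apply, partialSumCLM_truncate]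
    _ ≤ C * ‖f.truncate n‖ := ContinuousLinearMap.le_of_opNorm_le _ (hC n) _
    _ ≤ C * ‖f‖ := mul_le_mul_of_nonneg_left (f.norm_truncate_le n) hC0

noncomputable def rieszMeanCLM (r : ℕ → ℝ) (T : ℕ → X →L[ℝ] Y) (n : ℕ) : (ℕ →ᵇ X) →L[ℝ] Y :=
  (range (n + 1)).centerMass r fun k => partialSumCLM T (k + 1)

theorem rieszSeriesConvTo_iff_tendsto_rieszMeanCLM (r : ℕ → ℝ) (T : ℕ → X →L[ℝ] Y)
    (f : ℕ →ᵇ X) (y : Y) :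
    RieszSeriesConvTo r (fun k => T k (f k)) y ↔
      Tendsto (rieszMeanCLM r T · f) atTop (𝓝 y) := by
  simp [RieszSeriesConvTo, rieszMeanCLM, Finset.centerMass]

theorem norm_rieszMeanCLM_le {r : ℕ → ℝ} (hr : ∀ k, 0 ≤ r k) {T : ℕ → X →L[ℝ] Y} {C : ℝ}
    (hC : ∀ n, ‖partialSumCLM T n‖ ≤ C) (n : ℕ) : ‖rieszMeanCLM r T n‖ ≤ C :=
  norm_centerMass_le (fun k _ => hr k) ((norm_nonneg _).trans (hC 0)) fun k _ => hC (k + 1)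

end Multipliers

theorem MR_complete_of_c0_multiplier_convergent_general
    {X Y : Type*} [NormedAddCommGroup X] [NormedSpace ℝ X] [CompleteSpace X]
    [NormedAddCommGroup Y] [NormedSpace ℝ Y] [CompleteSpace Y]
    (r : ℕ → ℝ) (hr : ∀ k, 0 ≤ r k)
    (T : ℕ → X →L[ℝ] Y)
    (hc0 : ∀ x : ℕ → X, Tendsto x atTop (𝓝 0) → ∃ y : Y,
        Tendsto (fun n => ∑ k ∈ Finset.range n, T k (x k)) atTop (𝓝 y)) :
    IsComplete {f : ℕ →ᵇ X | ∃ y : Y, RieszSeriesConvTo r (fun k => T k (f k)) y} := by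
  obtain ⟨C, hC⟩ := exists_norm_partialSumCLM_le T fun x hx =>
    let ⟨_, hy⟩ := hc0 x hx
    hy.norm.bddAbove_range
  have hequi : Equicontinuous ((↑) ∘ rieszMeanCLM r T) :=
    ((NormedSpace.equicontinuous_TFAE (rieszMeanCLM r T)).out 5 1).mp
      (⟨C, norm_rieszMeanCLM_le hr hC⟩ : ∃ C, ∀ n, ‖rieszMeanCLM r T n‖ ≤ C)
  have hset : {f : ℕ →ᵇ X | ∃ y : Y, RieszSeriesConvTo r (fun k => T k (f k)) y} =
      {f | Cauchy (atTop.map (rieszMeanCLM r T · f))} := by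
    ext f
    simp only [Set.mem_ofPred_eq, rieszSeriesConvTo_iff_tendsto_rieszMeanCLM,
      cauchy_map_iff_exists_tendsto]
  rw [hset]
  exact hequi.isClosed_setOf_cauchy_map.isComplete

/-- If `∑ T k` is `c₀(X)`-multiplier convergent, then the multiplier space
`M^∞_R(∑ T k)` (realized as a subset of the Banach space of bounded `X`-valued
sequences with the sup norm) is complete, i.e. a Banach space. -/
theorem MR_complete_of_c0_multiplier_convergent
    {X Y : Type*} [NormedAddCommGroup X] [NormedSpace ℝ X] [CompleteSpace X]
    [NormedAddCommGroup Y] [NormedSpace ℝ Y] [CompleteSpace Y]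
    (r : ℕ → ℝ) (hr0 : 0 < r 0) (hr : ∀ k, 0 ≤ r k)
    (hR : Tendsto (fun n => ∑ k ∈ Finset.range n, r k) atTop atTop)
    (T : ℕ → X →L[ℝ] Y)
    (hc0 : ∀ x : ℕ → X, Tendsto x atTop (𝓝 0) → ∃ y : Y,
        Tendsto (fun n => ∑ k ∈ Finset.range n, T k (x k)) atTop (𝓝 y)) :
    IsComplete {f : ℕ →ᵇ X | ∃ y : Y, RieszSeriesConvTo r (fun k => T k (f k)) y} :=
  MR_complete_of_c0_multiplier_convergent_general r hr T hc0
end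

section
/- Let X and Y be Banach spaces and T_k ∈ B(X,Y). The series ∑_k T_k is c_0(X)-multiplier convergent if and only if every null sequence (x_k) in X belongs to M^∞_R(∑_k T_k), i.e., c_0(X) ⊆ M^∞_R(∑_k T_k). -/
/-!
Riesz means are regular (a weighted Toeplitz theorem, obtained from `IsLittleO.sum_range`), so
convergence of `∑ T k (x k)` implies its Riesz convergence.

Conversely, if `∑ T k (x k)` diverges for a null sequence `x`, its partial sums jump by at least
`ε` on blocks starting arbitrarily far out. Gliding hump: keep `x` only on a sparse family of such
blocks, separated by gaps so long that at the end of each gap the Riesz mean has settled within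
`ε / 4` of the (then constant) partial sum. The thinned sequence is still null, but its Riesz
means oscillate by at least `ε / 2`.
-/

open Filter Finset Topology

section IndicatorSums

variable {A : Set ℕ} {m n : ℕ}

theorem sum_range_indicator_eq_of_forall_notMem {M : Type*} [AddCommMonoid M] {f : ℕ → M}
    (hmn : m ≤ n) (hA : ∀ k, m ≤ k → k < n → k ∉ A) :
    ∑ k ∈ range n, A.indicator f k = ∑ k ∈ range m, A.indicator f k := by
  rw [← sum_range_add_sum_Ico _ hmn,
    sum_eq_zero fun k hk => Set.indicator_of_notMem (hA k (mem_Ico.1 hk).1 (mem_Ico.1 hk).2) f,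
    add_zero]

theorem sum_Ico_indicator_of_subset {M : Type*} [AddCommMonoid M] {f : ℕ → M}
    (hA : Set.Ico m n ⊆ A) : ∑ k ∈ Ico m n, A.indicator f k = ∑ k ∈ Ico m n, f k :=
  sum_congr rfl fun k hk => Set.indicator_of_mem (hA (by simpa using hk)) f

theorem norm_sum_range_indicator_sub_le {E : Type*} [SeminormedAddCommGroup E] (A : Set ℕ)
    (f : ℕ → E) (hmn : m ≤ n) :
    ‖∑ k ∈ range n, A.indicator f k - ∑ k ∈ range m, A.indicator f k‖ ≤ ∑ k ∈ range n, ‖f k‖ := by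
  rw [← sum_range_add_sum_Ico _ hmn, add_sub_cancel_left]
  calc _ ≤ ∑ k ∈ Ico m n, ‖f k‖ := norm_sum_le_of_le _ fun k _ => norm_indicator_le_norm_self f k
    _ ≤ ∑ k ∈ range n, ‖f k‖ :=
      sum_le_sum_of_subset_of_nonneg (fun k hk => mem_range.2 (mem_Ico.1 hk).2) fun _ _ _ =>
        norm_nonneg _

end IndicatorSums

theorem notMem_iUnion_Ico_of_mem_Ico {e a : ℕ → ℕ} (hea : ∀ j, e j ≤ a j)
    (hae : ∀ j, a j ≤ e (j + 1)) {j k : ℕ} (hk : k ∈ Set.Ico (e j) (a j)) :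
    k ∉ ⋃ i, Set.Ico (a i) (e (i + 1)) := by
  have he : Monotone e := monotone_nat_of_le_succ fun i => (hea i).trans (hae i)
  have ha : Monotone a := monotone_nat_of_le_succ fun i => (hae i).trans (hea (i + 1))
  simp only [Set.mem_iUnion, Set.mem_Ico, not_exists, not_and, not_lt]
  intro i hi
  rcases lt_or_ge i j with hij | hij
  · exact (he hij).trans hk.1
  · exact absurd (hi.trans_lt hk.2) (not_lt.2 (ha hij))

theorem not_cauchySeq_of_dist_succ_ge {α : Type*} [PseudoMetricSpace α] {u v : ℕ → α} {ε : ℝ}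
    (hε : 0 < ε) (hv : ∀ j, ε ≤ dist (v (j + 1)) (v j)) (huv : ∀ j, dist (u j) (v j) < ε / 4) :
    ¬CauchySeq u := by
  intro hu
  obtain ⟨N, hN⟩ := Metric.cauchySeq_iff'.1 hu (ε / 2) (by positivity)
  have := dist_triangle4 (v (N + 1)) (u (N + 1)) (u N) (v N)
  linarith [hv N, huv N, huv (N + 1), dist_comm (v (N + 1)) (u (N + 1)), hN (N + 1) N.le_succ]

section Riesz

variable {Y : Type*} [NormedAddCommGroup Y] [NormedSpace ℝ Y] {r : ℕ → ℝ}

/-- `RieszSeriesConvTo r s l` is, by definition, convergence to `l` of `rieszMean r` applied to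
the partial sums `fun k => ∑ j ∈ range (k + 1), s j`. -/
noncomputable def rieszMean (r : ℕ → ℝ) (s : ℕ → Y) (n : ℕ) : Y :=
  (∑ k ∈ range (n + 1), r k)⁻¹ • ∑ k ∈ range (n + 1), r k • s k

theorem rieszMean_sub_of_ne_zero (s : ℕ → Y) (c : Y) {n : ℕ} (hn : ∑ k ∈ range (n + 1), r k ≠ 0) :
    rieszMean r s n - c =
      (∑ k ∈ range (n + 1), r k)⁻¹ • ∑ k ∈ range (n + 1), r k • (s k - c) := by
  simp only [rieszMean, smul_sub, sum_sub_distrib, ← sum_smul]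
  rw [smul_smul, inv_mul_cancel₀ hn, one_smul]

theorem Filter.Tendsto.rieszMean {u : ℕ → Y} {l : Y} (hu : Tendsto u atTop (𝓝 l))
    (hr : ∀ k, 0 ≤ r k) (hR : Tendsto (fun n => ∑ k ∈ range n, r k) atTop atTop) :
    Tendsto (_root_.rieszMean r u) atTop (𝓝 l) := by
  have hR' : Tendsto (fun n => ∑ k ∈ range (n + 1), r k) atTop atTop :=
    hR.comp (tendsto_add_atTop_nat 1)
  have hsmall : (fun k => r k • (u k - l)) =o[atTop] r := by
    simpa using (Asymptotics.isBigO_refl r atTop).smul_isLittleO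
      ((Asymptotics.isLittleO_one_iff ℝ).2 (tendsto_sub_nhds_zero_iff.2 hu))
  have hsum := (hsmall.sum_range hr hR).comp_tendsto (tendsto_add_atTop_nat 1)
  rw [← tendsto_sub_nhds_zero_iff, ← Asymptotics.isLittleO_one_iff ℝ]
  refine ((Asymptotics.isBigO_refl (fun n => (∑ k ∈ range (n + 1), r k)⁻¹) atTop).smul_isLittleO
    hsum).congr' ?_ ?_
  · filter_upwards [hR'.eventually_ne_atTop 0] with n hn
    exact (rieszMean_sub_of_ne_zero u l hn).symm
  · filter_upwards [hR'.eventually_ne_atTop 0] with n hn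
    exact inv_mul_cancel₀ hn

theorem eventually_norm_rieszMean_sub_lt (hr : ∀ k, 0 ≤ r k)
    (hR : Tendsto (fun n => ∑ k ∈ range n, r k) atTop atTop) (b : ℕ) (K : ℝ) {δ : ℝ}
    (hδ : 0 < δ) :
    ∀ᶠ t in atTop, ∀ (s : ℕ → Y) (c : Y), (∀ k < b, ‖s k - c‖ ≤ K) →
      (∀ k, b ≤ k → k ≤ t → s k = c) → ‖rieszMean r s t - c‖ < δ := by
  have hR' : Tendsto (fun n => ∑ k ∈ range (n + 1), r k) atTop atTop :=
    hR.comp (tendsto_add_atTop_nat 1)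
  have hsmall : Tendsto (fun t => (∑ k ∈ range (t + 1), r k)⁻¹ * ((∑ k ∈ range b, r k) * K))
      atTop (𝓝 0) := by
    simpa using (tendsto_inv_atTop_zero.comp hR').mul_const ((∑ k ∈ range b, r k) * K)
  filter_upwards [eventually_ge_atTop b, hR'.eventually_gt_atTop 0,
    hsmall.eventually_lt_const hδ] with t hbt hpos hlt s c hbefore hplateau
  have hsplit : ∑ k ∈ range (t + 1), r k • (s k - c) = ∑ k ∈ range b, r k • (s k - c) := by
    rw [← sum_range_add_sum_Ico _ (by omega : b ≤ t + 1), add_eq_left]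
    exact sum_eq_zero fun k hk => by
      rw [hplateau k (mem_Ico.1 hk).1 (Nat.lt_succ_iff.1 (mem_Ico.1 hk).2), sub_self, smul_zero]
  calc ‖rieszMean r s t - c‖
      = (∑ k ∈ range (t + 1), r k)⁻¹ * ‖∑ k ∈ range b, r k • (s k - c)‖ := by
        rw [rieszMean_sub_of_ne_zero s c hpos.ne', hsplit, norm_smul,
          Real.norm_of_nonneg (inv_nonneg.2 hpos.le)]
    _ ≤ (∑ k ∈ range (t + 1), r k)⁻¹ * ((∑ k ∈ range b, r k) * K) := by
        gcongr
        rw [sum_mul]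
        refine norm_sum_le_of_le _ fun k hk => ?_
        rw [norm_smul, Real.norm_of_nonneg (hr k)]
        exact mul_le_mul_of_nonneg_left (hbefore k (mem_range.1 hk)) (hr k)
    _ < δ := hlt

theorem exists_forall_not_rieszSeriesConvTo_indicator (hr : ∀ k, 0 ≤ r k)
    (hR : Tendsto (fun n => ∑ k ∈ range n, r k) atTop atTop) {f : ℕ → Y}
    (hf : ¬CauchySeq fun n => ∑ k ∈ range n, f k) :
    ∃ A : Set ℕ, ∀ l, ¬RieszSeriesConvTo r (A.indicator f) l := by
  set P : ℕ → Y := fun n => ∑ k ∈ range n, f k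
  obtain ⟨ε, hε, hjump⟩ : ∃ ε > 0, ∀ N, ∃ n ≥ N, ε ≤ dist (P n) (P N) := by
    simpa [Metric.cauchySeq_iff'] using hf
  choose next hnext_ge hnext using hjump
  choose wait hwait hwait_ge using fun b =>
    ((eventually_norm_rieszMean_sub_lt (Y := Y) hr hR b (∑ k ∈ range b, ‖f k‖)
      (by positivity : 0 < ε / 4)).and (eventually_ge_atTop b)).exists
  set e : ℕ → ℕ := fun j => (fun b => next (wait b + 1))^[j] 0
  have he_succ : ∀ j, e (j + 1) = next (wait (e j) + 1) := fun j =>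
    Function.iterate_succ_apply' _ j 0
  have hea : ∀ j, e j < wait (e j) + 1 := fun j => Nat.lt_succ_of_le (hwait_ge _)
  have hae : ∀ j, wait (e j) + 1 ≤ e (j + 1) := fun j => (he_succ j) ▸ hnext_ge _
  set A := ⋃ j, Set.Ico (wait (e j) + 1) (e (j + 1))
  set S : ℕ → Y := fun n => ∑ k ∈ range n, A.indicator f k
  have hgap : ∀ j k, e j ≤ k → k ≤ wait (e j) → S (k + 1) = S (e j) := fun j k h1 h2 =>
    sum_range_indicator_eq_of_forall_notMem (by omega) fun i hi1 hi2 =>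
      notMem_iUnion_Ico_of_mem_Ico (fun j => (hea j).le) hae ⟨hi1, by omega⟩
  have hjumpS : ∀ j, ε ≤ dist (S (e (j + 1))) (S (e j)) := by
    intro j
    have hblock : S (e (j + 1)) - S (e j) = P (e (j + 1)) - P (wait (e j) + 1) := by
      rw [← hgap j (wait (e j)) (hwait_ge _) le_rfl]
      simp only [S, P]
      rw [← sum_range_add_sum_Ico _ (hae j), add_sub_cancel_left,
        sum_Ico_indicator_of_subset (Set.subset_iUnion_of_subset j subset_rfl :
          Set.Ico (wait (e j) + 1) (e (j + 1)) ⊆ A),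
        sum_Ico_eq_sub _ (hae j)]
    rw [dist_eq_norm, hblock, ← dist_eq_norm, he_succ]
    exact hnext _
  have hclose : ∀ j, dist (rieszMean r (fun n => S (n + 1)) (wait (e j))) (S (e j)) < ε / 4 := by
    intro j
    rw [dist_eq_norm]
    refine hwait (e j) _ _ (fun k hk => ?_) (hgap j)
    rw [norm_sub_rev]
    exact norm_sum_range_indicator_sub_le A f hk
  have hwait_top : Tendsto (fun j => wait (e j)) atTop atTop :=
    tendsto_atTop_mono (fun j => hwait_ge (e j))
      (strictMono_nat_of_lt_succ fun j => (hea j).trans_le (hae j)).tendsto_atTop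
  exact ⟨A, fun l hl => not_cauchySeq_of_dist_succ_ge hε hjumpS hclose
    ((Tendsto.comp hl hwait_top).cauchySeq)⟩

end Riesz

theorem c0_multiplier_convergent_iff_c0_subset_MR_general
    {X Y : Type*} [NormedAddCommGroup X] [NormedSpace ℝ X]
    [NormedAddCommGroup Y] [NormedSpace ℝ Y] [CompleteSpace Y]
    (r : ℕ → ℝ) (hr : ∀ k, 0 ≤ r k)
    (hR : Tendsto (fun n => ∑ k ∈ Finset.range n, r k) atTop atTop)
    (T : ℕ → X →L[ℝ] Y) :
    (∀ x : ℕ → X, Tendsto x atTop (𝓝 0) → ∃ y : Y,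
        Tendsto (fun n => ∑ k ∈ Finset.range n, T k (x k)) atTop (𝓝 y)) ↔
    (∀ x : ℕ → X, Tendsto x atTop (𝓝 0) → ∃ y : Y,
        RieszSeriesConvTo r (fun k => T k (x k)) y) := by
  refine ⟨fun h x hx => ?_, fun h x hx => ?_⟩
  · obtain ⟨y, hy⟩ := h x hx
    exact ⟨y, (hy.comp (tendsto_add_atTop_nat 1)).rieszMean hr hR⟩
  · by_contra hdiv
    obtain ⟨A, hA⟩ := exists_forall_not_rieszSeriesConvTo_indicator hr hR
      fun hc : CauchySeq fun n => ∑ k ∈ range n, T k (x k) =>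
        hdiv (cauchySeq_tendsto_of_complete hc)
    have hnull : Tendsto (A.indicator x) atTop (𝓝 0) :=
      squeeze_zero_norm (norm_indicator_le_norm_self x) (tendsto_zero_iff_norm_tendsto_zero.1 hx)
    have hTA : (fun k => T k (A.indicator x k)) = A.indicator fun k => T k (x k) := by
      funext k
      by_cases hk : k ∈ A <;> simp [hk]
    obtain ⟨y, hy⟩ := h _ hnull
    exact hA y (hTA ▸ hy)

/-- `∑ T k` is `c₀(X)`-multiplier convergent iff `c₀(X) ⊆ M^∞_R(∑ T k)`, i.e.
iff `∑ T k x k` is Riesz convergent for every null sequence `(x k)` in `X`. -/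
theorem c0_multiplier_convergent_iff_c0_subset_MR
    {X Y : Type*} [NormedAddCommGroup X] [NormedSpace ℝ X] [CompleteSpace X]
    [NormedAddCommGroup Y] [NormedSpace ℝ Y] [CompleteSpace Y]
    (r : ℕ → ℝ) (hr0 : 0 < r 0) (hr : ∀ k, 0 ≤ r k)
    (hR : Tendsto (fun n => ∑ k ∈ Finset.range n, r k) atTop atTop)
    (T : ℕ → X →L[ℝ] Y) :
    (∀ x : ℕ → X, Tendsto x atTop (𝓝 0) → ∃ y : Y,
        Tendsto (fun n => ∑ k ∈ Finset.range n, T k (x k)) atTop (𝓝 y)) ↔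
    (∀ x : ℕ → X, Tendsto x atTop (𝓝 0) → ∃ y : Y,
        RieszSeriesConvTo r (fun k => T k (x k)) y) :=
  c0_multiplier_convergent_iff_c0_subset_MR_general r hr hR T
end

section
/- Let X and Y be Banach spaces and T_k ∈ B(X,Y). If ∑_k T_k is c_0(X)-multiplier convergent, then every sequence x = (x_k) in M^∞_R(∑_k T_k) also lies in M^∞_w(∑_k T_k), i.e., M^∞_R(∑_k T_k) ⊆ M^∞_w(∑_k T_k); that is, if ∑_k T_k x_k is Riesz convergent for a bounded sequence (x_k), then ∑_k T_k x_k is weakly convergent. -/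
/-!
Fix a functional `φ ∈ Y*` and put `b k = φ (T k (x k))`. For every real null sequence `t`, the
sequence `t k • x k` is null because `x` is bounded, so `∑ t k * b k` converges; this forces
`∑ |b k|` to converge, since otherwise the Abel–Dini theorem produces a null `t`, namely
`sign (b k)` divided by the square root of the partial sums of `|b|`, with divergent `∑ t k * b k`.
Hence `∑ b k` converges to some `c`. Weighted means are regular, so the Riesz means of `∑ b k` also
tend to `c`, while by continuity of `φ` they tend to `φ y` for the Riesz sum `y`; thus `c = φ y`.
-/

open Filter Finset Topology

theorem Filter.Tendsto.weightedMean_smul {E : Type*} [NormedAddCommGroup E] [NormedSpace ℝ E]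
    {u : ℕ → E} {l : E} (h : Tendsto u atTop (𝓝 l)) {r : ℕ → ℝ} (hr : 0 ≤ r)
    (hR : Tendsto (fun n => ∑ k ∈ range n, r k) atTop atTop) :
    Tendsto (fun n => (∑ k ∈ range n, r k)⁻¹ • ∑ k ∈ range n, r k • u k) atTop (𝓝 l) := by
  rw [← tendsto_sub_nhds_zero_iff, ← Asymptotics.isLittleO_one_iff ℝ]
  have hterm : (fun k => r k • (u k - l)) =o[atTop] r := by
    simpa using (Asymptotics.isBigO_refl r atTop).smul_isLittleO
      ((Asymptotics.isLittleO_one_iff ℝ).2 (tendsto_sub_nhds_zero_iff.2 h))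
  apply ((Asymptotics.isBigO_refl (fun n => (∑ k ∈ range n, r k)⁻¹) atTop).smul_isLittleO
    (hterm.sum_range hr hR)).congr'
  · filter_upwards [hR.eventually_gt_atTop 0] with n hn
    simp only [smul_sub, sum_sub_distrib, ← sum_smul, smul_smul, inv_mul_cancel₀ hn.ne', one_smul]
  · filter_upwards [hR.eventually_gt_atTop 0] with n hn
    rw [smul_eq_mul, inv_mul_cancel₀ hn.ne']

theorem RieszSeriesConvTo.of_tendsto_sum_range {Y : Type*} [NormedAddCommGroup Y]
    [NormedSpace ℝ Y] {r : ℕ → ℝ} (hr : 0 ≤ r)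
    (hR : Tendsto (fun n => ∑ k ∈ range n, r k) atTop atTop) {s : ℕ → Y} {l : Y}
    (h : Tendsto (fun n => ∑ k ∈ range n, s k) atTop (𝓝 l)) : RieszSeriesConvTo r s l :=
  ((h.comp (tendsto_add_atTop_nat 1)).weightedMean_smul hr hR).comp (tendsto_add_atTop_nat 1)

theorem RieszSeriesConvTo.map {Y Z : Type*} [NormedAddCommGroup Y] [NormedSpace ℝ Y]
    [NormedAddCommGroup Z] [NormedSpace ℝ Z] {r : ℕ → ℝ} {s : ℕ → Y} {l : Y}
    (h : RieszSeriesConvTo r s l) (φ : Y →L[ℝ] Z) : RieszSeriesConvTo r (fun k => φ (s k)) (φ l) :=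
  ((φ.continuous.tendsto l).comp h).congr fun n => by simp [map_sum]

theorem Real.sqrt_sub_sqrt_le_sub_div_sqrt_s12 {x y : ℝ} (hx : 0 ≤ x) (hxy : x ≤ y) (hy : 0 < y) :
    √y - √x ≤ (y - x) / √y := by
  have hsy : 0 < √y := Real.sqrt_pos.2 hy
  rw [le_div_iff₀ hsy]
  nlinarith [Real.mul_self_sqrt hx, Real.mul_self_sqrt hy.le, Real.sqrt_le_sqrt hxy,
    Real.sqrt_nonneg x]

/-- The Abel–Dini theorem, for the exponent `1/2`. -/
theorem tendsto_sum_div_sqrt_one_add_sum_atTop {a : ℕ → ℝ} (ha : 0 ≤ a) (h : ¬ Summable a) :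
    Tendsto (fun n => ∑ k ∈ range n, a k / √(1 + ∑ j ∈ range (k + 1), a j)) atTop atTop := by
  set B : ℕ → ℝ := fun n => 1 + ∑ j ∈ range n, a j
  have hB : Tendsto B atTop atTop :=
    tendsto_atTop_add_const_left _ 1 ((not_summable_iff_tendsto_nat_atTop_of_nonneg ha).1 h)
  have hB_one : ∀ n, 1 ≤ B n := fun n => le_add_of_nonneg_right (sum_nonneg fun j _ => ha j)
  have hstep : ∀ k, √(B (k + 1)) - √(B k) ≤ a k / √(B (k + 1)) := fun k => by
    have hBk : B (k + 1) = B k + a k := by simp only [B, sum_range_succ]; ring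
    simpa [hBk] using Real.sqrt_sub_sqrt_le_sub_div_sqrt_s12 (zero_le_one.trans (hB_one k))
      (hBk ▸ le_add_of_nonneg_right (ha k)) (zero_lt_one.trans_le (hB_one (k + 1)))
  refine tendsto_atTop_mono (fun n => ?_)
    (tendsto_atTop_add_const_right _ (-1) (Real.tendsto_sqrt_atTop.comp hB))
  calc √(B n) + -1 = ∑ k ∈ range n, (√(B (k + 1)) - √(B k)) := by
        rw [sum_range_sub (fun k => √(B k))]; simp [B, sub_eq_add_neg]
    _ ≤ _ := sum_le_sum fun k _ => hstep k

theorem summable_of_forall_tendsto_zero_mul {b : ℕ → ℝ}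
    (h : ∀ t : ℕ → ℝ, Tendsto t atTop (𝓝 0) →
      ∃ c, Tendsto (fun n => ∑ k ∈ range n, t k * b k) atTop (𝓝 c)) :
    Summable b := by
  refine Summable.of_abs (not_not.1 fun hb => ?_)
  set S : ℕ → ℝ := fun k => √(1 + ∑ j ∈ range (k + 1), |b j|)
  have hS : Tendsto S atTop atTop := Real.tendsto_sqrt_atTop.comp <|
    tendsto_atTop_add_const_left _ 1 <|
      ((not_summable_iff_tendsto_nat_atTop_of_nonneg fun j => abs_nonneg (b j)).1 hb).comp
        (tendsto_add_atTop_nat 1)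
  have ht : Tendsto (fun k => (S k)⁻¹ * (SignType.sign (b k) : ℝ)) atTop (𝓝 0) :=
    hS.inv_tendsto_atTop.zero_mul_isBoundedUnder_le <| isBoundedUnder_of
      ⟨1, fun k => by rcases lt_trichotomy (b k) 0 with hk | hk | hk <;> simp [hk]⟩
  obtain ⟨c, hc⟩ := h _ ht
  refine not_tendsto_atTop_of_tendsto_nhds hc ?_
  convert tendsto_sum_div_sqrt_one_add_sum_atTop (fun j => abs_nonneg (b j)) hb using 3 with n k
  rw [mul_assoc, sign_mul_self, inv_mul_eq_div]

theorem MR_subset_Mw_of_c0_multiplier_convergent_general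
    {X Y : Type*} [NormedAddCommGroup X] [NormedSpace ℝ X]
    [NormedAddCommGroup Y] [NormedSpace ℝ Y]
    (r : ℕ → ℝ) (hr : ∀ k, 0 ≤ r k)
    (hR : Tendsto (fun n => ∑ k ∈ Finset.range n, r k) atTop atTop)
    (T : ℕ → X →L[ℝ] Y)
    (hc0 : ∀ x : ℕ → X, Tendsto x atTop (𝓝 0) → ∃ y : Y,
        Tendsto (fun n => ∑ k ∈ Finset.range n, T k (x k)) atTop (𝓝 y)) :
    ∀ x : ℕ → X, (∃ C : ℝ, ∀ k, ‖x k‖ ≤ C) →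
      (∃ y : Y, RieszSeriesConvTo r (fun k => T k (x k)) y) →
      ∃ y0 : Y, ∀ φ : Y →L[ℝ] ℝ,
        Tendsto (fun n => φ (∑ k ∈ Finset.range n, T k (x k))) atTop (𝓝 (φ y0)) := by
  rintro x ⟨C, hC⟩ ⟨y, hy⟩
  refine ⟨y, fun φ => ?_⟩
  have hsum : Summable fun k => φ (T k (x k)) := by
    refine summable_of_forall_tendsto_zero_mul fun t ht => ?_
    obtain ⟨w, hw⟩ := hc0 (fun k => t k • x k)
      (ht.zero_smul_isBoundedUnder_le (isBoundedUnder_of ⟨C, hC⟩))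
    exact ⟨φ w, ((φ.continuous.tendsto w).comp hw).congr fun n => by simp [map_sum]⟩
  obtain ⟨c, hc⟩ := hsum
  have hpartial := hc.tendsto_sum_nat
  obtain rfl : c = φ y := tendsto_nhds_unique
    (RieszSeriesConvTo.of_tendsto_sum_range hr hR hpartial) (hy.map φ)
  simpa only [map_sum] using hpartial

/-- If `∑ T k` is `c₀(X)`-multiplier convergent, then `M^∞_R(∑ T k) ⊆ M^∞_w(∑ T k)`:
for every bounded sequence `(x k)` for which `∑ T k x k` is Riesz convergent,
the series `∑ T k x k` is weakly convergent. -/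
theorem MR_subset_Mw_of_c0_multiplier_convergent
    {X Y : Type*} [NormedAddCommGroup X] [NormedSpace ℝ X] [CompleteSpace X]
    [NormedAddCommGroup Y] [NormedSpace ℝ Y] [CompleteSpace Y]
    (r : ℕ → ℝ) (hr0 : 0 < r 0) (hr : ∀ k, 0 ≤ r k)
    (hR : Tendsto (fun n => ∑ k ∈ Finset.range n, r k) atTop atTop)
    (T : ℕ → X →L[ℝ] Y)
    (hc0 : ∀ x : ℕ → X, Tendsto x atTop (𝓝 0) → ∃ y : Y,
        Tendsto (fun n => ∑ k ∈ Finset.range n, T k (x k)) atTop (𝓝 y)) :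
    ∀ x : ℕ → X, (∃ C : ℝ, ∀ k, ‖x k‖ ≤ C) →
      (∃ y : Y, RieszSeriesConvTo r (fun k => T k (x k)) y) →
      ∃ y0 : Y, ∀ φ : Y →L[ℝ] ℝ,
        Tendsto (fun n => φ (∑ k ∈ Finset.range n, T k (x k))) atTop (𝓝 (φ y0)) :=
  MR_subset_Mw_of_c0_multiplier_convergent_general r hr hR T hc0
end

section
/- Let X and Y be normed spaces, T_k ∈ B(X,Y), and suppose the series ∑_k T_k is c_0(X)-multiplier Cauchy. Then the set { ‖∑_{k=1}^n T_k x_k‖ : n ∈ ℕ, ‖x_k‖ ≤ 1 for all k ≤ n } is bounded; i.e., there exists H > 0 such that ‖∑_{k=1}^n T_k x_k‖ ≤ H for all n and all x_1, ..., x_n in the closed unit ball of X. -/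
/-!
Gliding hump. If the sums `∑_{k<n} T k (x k)` over unit-ball sequences were unbounded, then,
since the first `m` terms contribute at most `∑_{k<m} ‖T k‖`, one finds successive blocks
`[M j, M (j+1))` and unit-ball vectors on them whose block sums have norm `> (j+1)^2`.
Scaling block `j` by `(j+1)⁻¹` yields a null sequence whose block sums have norm `> j+1`,
so its partial sums are not Cauchy.
-/

open Filter Finset Topology

section Blocks

def blockIndex (M : ℕ → ℕ) (k : ℕ) : ℕ := Nat.findGreatest (fun j => M j ≤ k) k

variable {M : ℕ → ℕ}

theorem blockIndex_eq (hM : StrictMono M) {j k : ℕ} (hjk : M j ≤ k) (hkj : k < M (j + 1)) :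
    blockIndex M k = j := by
  refine Nat.findGreatest_eq_iff.2 ⟨(hM.id_le j).trans hjk, fun _ => hjk, fun i hji _ hik => ?_⟩
  exact hkj.not_ge ((hM.monotone (Nat.succ_le_of_lt hji)).trans hik)

theorem mem_Ico_blockIndex (hM : StrictMono M) {k : ℕ} (hk : M 0 ≤ k) :
    k ∈ Ico (M (blockIndex M k)) (M (blockIndex M k + 1)) := by
  refine mem_Ico.2 ⟨Nat.findGreatest_spec (P := fun j => M j ≤ k) (Nat.zero_le k) hk,
    not_le.1 fun hle => ?_⟩
  exact Nat.findGreatest_is_greatest (Nat.lt_succ_self _) ((hM.id_le _).trans hle) hle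

theorem tendsto_blockIndex_atTop (hM : StrictMono M) : Tendsto (blockIndex M) atTop atTop :=
  tendsto_atTop_atTop.2 fun j => ⟨M j, fun _ hk => Nat.le_findGreatest ((hM.id_le j).trans hk) hk⟩

end Blocks

theorem tendsto_inv_smul_blockIndex {E : Type*} [SeminormedAddCommGroup E] [NormedSpace ℝ E]
    {M : ℕ → ℕ} (hM : StrictMono M) {x : ℕ → ℕ → E}
    (hx : ∀ j, ∀ k ∈ Ico (M j) (M (j + 1)), ‖x j k‖ ≤ 1) :
    Tendsto (fun k => ((blockIndex M k : ℝ) + 1)⁻¹ • x (blockIndex M k) k) atTop (𝓝 0) := by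
  have hinv : Tendsto (fun k => ((blockIndex M k : ℝ) + 1)⁻¹) atTop (𝓝 0) :=
    tendsto_inv_atTop_zero.comp <| tendsto_atTop_add_const_right _ 1 <|
      tendsto_natCast_atTop_atTop.comp (tendsto_blockIndex_atTop hM)
  refine squeeze_zero_norm' ?_ hinv
  filter_upwards [eventually_ge_atTop (M 0)] with k hk
  rw [norm_smul, Real.norm_of_nonneg (by positivity)]
  exact mul_le_of_le_one_right (by positivity) (hx _ k (mem_Ico_blockIndex hM hk))

theorem CauchySeq.tendsto_sum_Ico_zero {E : Type*} [SeminormedAddCommGroup E] {f : ℕ → E}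
    (hf : CauchySeq fun n => ∑ k ∈ range n, f k) {M : ℕ → ℕ} (hM : Monotone M)
    (hM' : Tendsto M atTop atTop) :
    Tendsto (fun j => ∑ k ∈ Ico (M j) (M (j + 1)), f k) atTop (𝓝 0) := by
  have hpair : Tendsto (fun j => (M (j + 1), M j)) atTop atTop := by
    rw [← prod_atTop_atTop_eq]
    exact (hM'.comp (tendsto_add_atTop_nat 1)).prodMk hM'
  have hdist := (cauchySeq_iff_tendsto_dist_atTop_0.1 hf).comp hpair
  rw [tendsto_zero_iff_norm_tendsto_zero]
  refine hdist.congr fun j => ?_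
  simp [dist_eq_norm, sum_Ico_eq_sub _ (hM j.le_succ)]

section GlidingHump

variable {𝕜 E F : Type*} [NontriviallyNormedField 𝕜] [SeminormedAddCommGroup E]
  [NormedSpace 𝕜 E] [SeminormedAddCommGroup F] [NormedSpace 𝕜 F] (T : ℕ → E →L[𝕜] F)

theorem norm_sum_apply_le_sum_opNorm {s : Finset ℕ} {x : ℕ → E} (hx : ∀ k ∈ s, ‖x k‖ ≤ 1) :
    ‖∑ k ∈ s, T k (x k)‖ ≤ ∑ k ∈ s, ‖T k‖ :=
  (norm_sum_le _ _).trans <| sum_le_sum fun k hk =>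
    ((T k).le_opNorm _).trans (mul_le_of_le_one_right (norm_nonneg _) (hx k hk))

theorem norm_sum_range_le_add_norm_sum_Ico {m n : ℕ} {x : ℕ → E} (hx : ∀ k < n, ‖x k‖ ≤ 1) :
    ‖∑ k ∈ range n, T k (x k)‖ ≤ ∑ k ∈ range m, ‖T k‖ + ‖∑ k ∈ Ico m n, T k (x k)‖ := by
  rcases le_or_gt m n with hmn | hnm
  · rw [← sum_range_add_sum_Ico _ hmn]
    refine (norm_add_le _ _).trans (add_le_add_left ?_ _)
    exact norm_sum_apply_le_sum_opNorm T fun k hk => hx k ((mem_range.1 hk).trans_le hmn)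
  · refine (norm_sum_apply_le_sum_opNorm T fun k hk => hx k (mem_range.1 hk)).trans ?_
    exact le_add_of_le_of_nonneg (sum_le_sum_of_subset_of_nonneg (range_mono hnm.le)
      fun _ _ _ => norm_nonneg _) (norm_nonneg _)

variable {T}

theorem exists_large_sum_Ico
    (hT : ∀ H > 0, ∃ n, ∃ x : ℕ → E, (∀ k < n, ‖x k‖ ≤ 1) ∧ H < ‖∑ k ∈ range n, T k (x k)‖)
    (m : ℕ) (c : ℝ) :
    ∃ n, ∃ x : ℕ → E, (∀ k ∈ Ico m n, ‖x k‖ ≤ 1) ∧ c < ‖∑ k ∈ Ico m n, T k (x k)‖ := by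
  set C := ∑ k ∈ range m, ‖T k‖
  have hC : 0 ≤ C := sum_nonneg fun _ _ => norm_nonneg _
  obtain ⟨n, x, hx, hlarge⟩ := hT (|c| + C + 1) (by positivity)
  refine ⟨n, x, fun k hk => hx k (mem_Ico.1 hk).2, ?_⟩
  have := norm_sum_range_le_add_norm_sum_Ico T (m := m) hx
  linarith [le_abs_self c]

theorem exists_strictMono_large_sum_Ico
    (hT : ∀ H > 0, ∃ n, ∃ x : ℕ → E, (∀ k < n, ‖x k‖ ≤ 1) ∧ H < ‖∑ k ∈ range n, T k (x k)‖)
    {c : ℕ → ℝ} (hc : ∀ j, 0 ≤ c j) :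
    ∃ M : ℕ → ℕ, StrictMono M ∧ ∃ x : ℕ → ℕ → E,
      (∀ j, ∀ k ∈ Ico (M j) (M (j + 1)), ‖x j k‖ ≤ 1) ∧
        ∀ j, c j < ‖∑ k ∈ Ico (M j) (M (j + 1)), T k (x j k)‖ := by
  choose n x hx hlarge using exists_large_sum_Ico hT
  let M : ℕ → ℕ := fun j => Nat.rec 0 (fun i Mi => n Mi (c i)) j
  have hblock (j : ℕ) : c j < ‖∑ k ∈ Ico (M j) (M (j + 1)), T k (x (M j) (c j) k)‖ :=
    hlarge _ _
  refine ⟨M, strictMono_nat_of_lt_succ fun j => ?_, fun j => x (M j) (c j),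
    fun j => hx _ _, hblock⟩
  refine nonempty_Ico.1 <|
    nonempty_of_sum_ne_zero (f := fun k => T k (x (M j) (c j) k)) fun h => ?_
  have := hblock j
  rw [h, norm_zero] at this
  exact (hc j).not_gt this

end GlidingHump

/-- If `∑ T k` is `c₀(X)`-multiplier Cauchy, then the partial sums
`∑_{k<n} T k x k` with `x k` in the closed unit ball are uniformly bounded. -/
theorem c0_multiplier_cauchy_uniform_bound
    {X Y : Type*} [NormedAddCommGroup X] [NormedSpace ℝ X]
    [NormedAddCommGroup Y] [NormedSpace ℝ Y]
    (T : ℕ → X →L[ℝ] Y)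
    (hC : ∀ x : ℕ → X, Tendsto x atTop (𝓝 0) →
        CauchySeq (fun n => ∑ k ∈ Finset.range n, T k (x k))) :
    ∃ H > 0, ∀ n : ℕ, ∀ x : ℕ → X, (∀ k < n, ‖x k‖ ≤ 1) →
      ‖∑ k ∈ Finset.range n, T k (x k)‖ ≤ H := by
  by_contra! hT
  obtain ⟨M, hM, x, hx, hlarge⟩ :=
    exists_strictMono_large_sum_Ico hT (c := fun j => ((j : ℝ) + 1) ^ 2) fun _ => by positivity
  set z : ℕ → X := fun k => ((blockIndex M k : ℝ) + 1)⁻¹ • x (blockIndex M k) k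
  have hblock (j : ℕ) : ∑ k ∈ Ico (M j) (M (j + 1)), T k (z k) =
      ((j : ℝ) + 1)⁻¹ • ∑ k ∈ Ico (M j) (M (j + 1)), T k (x j k) := by
    rw [smul_sum]
    refine sum_congr rfl fun k hk => ?_
    simp only [z, blockIndex_eq hM (mem_Ico.1 hk).1 (mem_Ico.1 hk).2, map_smul]
  have hsmall := tendsto_zero_iff_norm_tendsto_zero.1 <|
    (hC z (tendsto_inv_smul_blockIndex hM hx)).tendsto_sum_Ico_zero hM.monotone hM.tendsto_atTop
  obtain ⟨j, hj⟩ := (hsmall.eventually (gt_mem_nhds one_pos)).exists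
  have hpos : (0 : ℝ) < (j : ℝ) + 1 := by positivity
  have hbig : (j : ℝ) + 1 < ‖∑ k ∈ Ico (M j) (M (j + 1)), T k (z k)‖ := by
    rw [hblock, norm_smul, Real.norm_of_nonneg (inv_nonneg.2 hpos.le), lt_inv_mul_iff₀ hpos]
    simpa [sq] using hlarge j
  linarith [hj, hbig]
end

section
/- Let X be a normed space, Y a Banach space, and T_k ∈ B(X,Y). If ∑_k T_k is ℓ_∞(X)-multiplier convergent, then the series ∑_k T_k x_k converges uniformly in Y over all sequences (x_k) with ‖x_k‖ ≤ 1 for all k; i.e., sup{‖∑_{k=n+1}^∞ T_k x_k‖ : ‖x_k‖ ≤ 1 for all k} → 0 as n → ∞. -/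
/-!
Gliding hump. If the tails were not uniformly small, there would be some `ε > 0` and, beyond
every index, a unit-bounded sequence with a block sum of norm at least `ε`. Choosing these blocks
one after another, each starting past the end of the previous one, and patching the sequences
together on consecutive intervals gives a single unit-bounded sequence whose partial sums are not
Cauchy, contradicting multiplier convergence.
-/

open Filter Finset Topology

lemma exists_patch_of_strictMono {α : Type*} {a : ℕ → ℕ} (ha : StrictMono a)
    (x : ℕ → ℕ → α) :
    ∃ g : ℕ → α, (∀ k, ∃ j, g k = x j k) ∧ ∀ j, ∀ k ∈ Ico (a j) (a (j + 1)), g k = x j k := by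
  classical
  let blockIndex k := Nat.findGreatest (fun j => a j ≤ k) k
  refine ⟨fun k => x (blockIndex k) k, fun k => ⟨_, rfl⟩, fun j k hk => ?_⟩
  obtain ⟨hjk, hkj⟩ := mem_Ico.1 hk
  have : blockIndex k = j := by
    refine Nat.findGreatest_eq_iff.2 ⟨(ha.id_le j).trans hjk, fun _ => hjk, fun i hji _ => ?_⟩
    exact (hkj.trans_le (ha.monotone hji)).not_ge
  simp only [this]

lemma exists_forall_norm_sum_Ico_lt_of_forall_cauchySeq {α Y : Type*}
    [SeminormedAddCommGroup Y] (T : ℕ → α → Y) (B : Set α)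
    (h : ∀ x : ℕ → α, (∀ k, x k ∈ B) → CauchySeq fun n => ∑ k ∈ range n, T k (x k)) :
    ∀ ε > 0, ∃ N, ∀ x : ℕ → α, (∀ k, x k ∈ B) →
      ∀ n m, N ≤ n → n ≤ m → ‖∑ k ∈ Ico n m, T k (x k)‖ < ε := by
  by_contra! hump
  obtain ⟨ε, hε, hump⟩ := hump
  choose x hxB n m hn hnm hx using hump
  let a : ℕ → ℕ := fun j => Nat.rec 0 (fun _ p => m p + 1) j
  have ha : StrictMono a := strictMono_nat_of_lt_succ fun j =>
    Nat.lt_succ_of_le ((hn (a j)).trans (hnm (a j)))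
  obtain ⟨g, hgB, hg⟩ := exists_patch_of_strictMono ha fun j => x (a j)
  obtain ⟨N, hN⟩ := Metric.cauchySeq_iff.1
    (h g fun k => (hgB k).elim fun j hj => hj ▸ hxB _ k) ε hε
  have hNn : N ≤ n (a N) := (ha.id_le N).trans (hn _)
  have hblock : ∑ k ∈ Ico (n (a N)) (m (a N)), T k (g k)
      = ∑ k ∈ Ico (n (a N)) (m (a N)), T k (x (a N) k) := by
    refine sum_congr rfl fun k hk => ?_
    rw [hg N k (Ico_subset_Ico (hn _) (Nat.le_succ _) hk)]
  have hdist := hN _ (hNn.trans (hnm _)) _ hNn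
  rw [dist_eq_norm, ← sum_Ico_eq_sub _ (hnm _), hblock] at hdist
  exact (hx _).not_gt hdist

theorem linfty_multiplier_convergent_uniform_convergence_general
    {X Y : Type*} [NormedAddCommGroup X] [NormedSpace ℝ X]
    [NormedAddCommGroup Y] [NormedSpace ℝ Y]
    (T : ℕ → X →L[ℝ] Y)
    (h : ∀ x : ℕ → X, (∃ C : ℝ, ∀ k, ‖x k‖ ≤ C) → ∃ y : Y,
        Tendsto (fun n => ∑ k ∈ Finset.range n, T k (x k)) atTop (𝓝 y)) :
    ∀ ε > 0, ∃ N : ℕ, ∀ x : ℕ → X, (∀ k, ‖x k‖ ≤ 1) → ∀ y : Y,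
      Tendsto (fun n => ∑ k ∈ Finset.range n, T k (x k)) atTop (𝓝 y) →
      ∀ n ≥ N, ‖y - ∑ k ∈ Finset.range n, T k (x k)‖ ≤ ε := by
  intro ε hε
  have hcauchy (x : ℕ → X) (hx : ∀ k, x k ∈ Metric.closedBall 0 1) :
      CauchySeq fun n => ∑ k ∈ range n, T k (x k) :=
    (h x ⟨1, by simpa using hx⟩).choose_spec.cauchySeq
  obtain ⟨N, hN⟩ := exists_forall_norm_sum_Ico_lt_of_forall_cauchySeq
    (fun k => ⇑(T k)) _ hcauchy ε hε
  refine ⟨N, fun x hx y hy n hn => ?_⟩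
  -- the tail `y - Sₙ` is the limit of the block sums `Sₘ - Sₙ`
  refine le_of_tendsto (hy.sub_const _).norm (eventually_atTop.2 ⟨n, fun m hm => ?_⟩)
  rw [← sum_Ico_eq_sub _ hm]
  exact (hN x (by simpa using hx) n m hn hm).le

/-- If `∑ T k` is `ℓ∞(X)`-multiplier convergent, then the series `∑ T k x k`
converge uniformly over all sequences `(x k)` in the closed unit ball: the
tails are uniformly small. -/
theorem linfty_multiplier_convergent_uniform_convergence
    {X Y : Type*} [NormedAddCommGroup X] [NormedSpace ℝ X]
    [NormedAddCommGroup Y] [NormedSpace ℝ Y] [CompleteSpace Y]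
    (T : ℕ → X →L[ℝ] Y)
    (h : ∀ x : ℕ → X, (∃ C : ℝ, ∀ k, ‖x k‖ ≤ C) → ∃ y : Y,
        Tendsto (fun n => ∑ k ∈ Finset.range n, T k (x k)) atTop (𝓝 y)) :
    ∀ ε > 0, ∃ N : ℕ, ∀ x : ℕ → X, (∀ k, ‖x k‖ ≤ 1) → ∀ y : Y,
      Tendsto (fun n => ∑ k ∈ Finset.range n, T k (x k)) atTop (𝓝 y) →
      ∀ n ≥ N, ‖y - ∑ k ∈ Finset.range n, T k (x k)‖ ≤ ε :=
  linfty_multiplier_convergent_uniform_convergence_general T h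
end

section
/- Let X be a Banach space. A series ∑_k x_k in X is subseries convergent (∑_k x_{n_k} converges for every subsequence (n_k)) if and only if ∑_k t_k x_k converges for every bounded scalar sequence (t_k); moreover, in a general normed space, subseries convergence implies that ∑_k t_k x_k is a Cauchy series for every bounded scalar sequence (t_k). -/
open Filter Finset Topology

/-!
If the tails of a subseries convergent series were not uniformly small, one could pick consecutive
disjoint blocks `F i` of indices with `‖∑_{k ∈ F i} x k‖ ≥ ε`; the subseries running through all
the blocks is then not Cauchy. So for every `ε` there is `N` with `‖∑_{k ∈ F} x k‖ ≤ ε` for all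
finite `F ⊆ [N, ∞)`. Testing `∑_{k ∈ F} t k • x k` against a norming functional and splitting `F`
by the sign of the functional bounds it by `2 C ε` when `|t| ≤ C`; hence every bounded multiplier
series is Cauchy, and convergent when `X` is complete. Conversely, a subseries is the multiplier
series of the indicator of its index set, sampled along those indices.
-/

namespace Nat

variable {p : ℕ → Prop} [DecidablePred p]

theorem sum_filter_range_eq_sum_range_count {M : Type*} [AddCommMonoid M] (f : ℕ → M) (N : ℕ) :
    ∑ j ∈ range N with p j, f j = ∑ k ∈ range (count p N), f (nth p k) := by
  induction N with
  | zero => simp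
  | succ N ih =>
    rw [range_add_one, filter_insert, count_succ]
    by_cases hN : p N
    · rw [if_pos hN, if_pos hN, sum_insert (by simp), sum_range_succ, nth_count hN, ih, add_comm]
    · rw [if_neg hN, if_neg hN, ih, add_zero]

theorem tendsto_count_atTop (hp : (Set.ofPred p).Infinite) : Tendsto (count p) atTop atTop :=
  tendsto_atTop_atTop_of_monotone (count_monotone p) fun n =>
    ⟨nth p n, (count_nth_of_infinite hp n).ge⟩

theorem nth_mem_range_eq_of_strictMono {m : ℕ → ℕ} (hm : StrictMono m) :
    nth (· ∈ Set.range m) = m := by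
  funext n
  simpa using (nth_comp_of_strictMono (p := (· ∈ Set.range m)) hm (fun _ hk => hk)
    fun hf => absurd hf (Set.infinite_range_of_injective hm.injective)).symm

end Nat

theorem StrictMono.sum_range_indicator_range_eq {E : Type*} [AddCommMonoid E] (x : ℕ → E)
    {m : ℕ → ℕ} (hm : StrictMono m) (n : ℕ) :
    ∑ j ∈ range (m n), (Set.range m).indicator x j = ∑ k ∈ range n, x (m k) := by
  classical
  have hcount := Nat.count_nth_of_infinite (p := (· ∈ Set.range m))
    (Set.infinite_range_of_injective hm.injective) n
  rw [Nat.nth_mem_range_eq_of_strictMono hm] at hcount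
  rw [sum_indicator_eq_sum_filter, Nat.sum_filter_range_eq_sum_range_count, hcount,
    Nat.nth_mem_range_eq_of_strictMono hm]

section Subseries

variable {E : Type*} [SeminormedAddCommGroup E]

theorem exists_blocks_of_not_cauchySeq_finset {x : ℕ → E}
    (h : ¬CauchySeq fun s : Finset ℕ => ∑ i ∈ s, x i) :
    ∃ ε > 0, ∃ (B : ℕ → ℕ) (F : ℕ → Finset ℕ), StrictMono B ∧
      (∀ i, F i ⊆ Ico (B i) (B (i + 1))) ∧ ∀ i, ε ≤ ‖∑ k ∈ F i, x k‖ := by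
  rw [cauchySeq_finset_iff_vanishing_norm] at h
  push Not at h
  obtain ⟨ε, hε, hT⟩ := h
  choose T hTdisj hTnorm using hT
  let B : ℕ → ℕ := fun i => Nat.rec 0 (fun _ b => b + (T (range b)).sup id + 1) i
  have hBsucc : ∀ i, B (i + 1) = B i + (T (range (B i))).sup id + 1 := fun _ => rfl
  refine ⟨ε, hε, B, fun i => T (range (B i)),
    strictMono_nat_of_lt_succ fun i => by rw [hBsucc]; omega, fun i k hk => ?_,
    fun i => hTnorm _⟩
  have hBk : B i ≤ k := not_lt.mp fun hk' => disjoint_left.mp (hTdisj _) hk (mem_range.mpr hk')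
  have hkB : k ≤ (T (range (B i))).sup id := le_sup (f := id) hk
  rw [mem_Ico, hBsucc]
  omega

theorem cauchySeq_sum_filter_range_of_subseries {x : ℕ → E}
    (hx : ∀ m : ℕ → ℕ, StrictMono m → CauchySeq fun n => ∑ k ∈ range n, x (m k))
    {p : ℕ → Prop} [DecidablePred p] (hp : (Set.ofPred p).Infinite) :
    CauchySeq fun N => ∑ j ∈ range N with p j, x j := by
  simp_rw [Nat.sum_filter_range_eq_sum_range_count]
  exact (hx _ (Nat.nth_strictMono hp)).comp_tendsto (Nat.tendsto_count_atTop hp)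

theorem cauchySeq_finset_of_subseries {x : ℕ → E}
    (hx : ∀ m : ℕ → ℕ, StrictMono m → CauchySeq fun n => ∑ k ∈ range n, x (m k)) :
    CauchySeq fun s : Finset ℕ => ∑ i ∈ s, x i := by
  classical
  by_contra h
  obtain ⟨ε, hε, B, F, hB, hF, hFε⟩ := exists_blocks_of_not_cauchySeq_finset h
  let p : ℕ → Prop := fun j => ∃ i, j ∈ F i
  have hFne : ∀ i, (F i).Nonempty := fun i =>
    nonempty_of_sum_ne_zero fun h0 => (hFε i).not_gt (by rwa [h0, norm_zero])
  have hp : (Set.ofPred p).Infinite := Set.infinite_of_forall_exists_gt fun a => by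
    obtain ⟨k, hk⟩ := hFne (a + 1)
    have hkB : B (a + 1) ≤ k := (mem_Ico.mp (hF _ hk)).1
    have haB : a + 1 ≤ B (a + 1) := hB.id_le _
    exact ⟨k, ⟨a + 1, hk⟩, by omega⟩
  have hblock : ∀ i, {j ∈ Ico (B i) (B (i + 1)) | p j} = F i := fun i => by
    ext j
    refine ⟨fun hj => ?_, fun hj => mem_filter.mpr ⟨hF i hj, i, hj⟩⟩
    obtain ⟨hji, i', hji'⟩ := mem_filter.mp hj
    have hj' := mem_Ico.mp (hF i' hji')
    rw [mem_Ico] at hji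
    obtain rfl : i' = i := by
      rcases lt_trichotomy i' i with hi | rfl | hi
      · have := hB.monotone (show i' + 1 ≤ i from hi); omega
      · rfl
      · have := hB.monotone (show i + 1 ≤ i' from hi); omega
    exact hji'
  obtain ⟨N, hN⟩ := Metric.cauchySeq_iff.mp (cauchySeq_sum_filter_range_of_subseries hx hp) ε hε
  have hdist := hN _ ((hB.id_le N).trans (hB.monotone N.le_succ)) _ (hB.id_le N)
  rw [dist_eq_norm, sum_filter, sum_filter, ← sum_Ico_eq_sub _ (hB.monotone N.le_succ),
    ← sum_filter, hblock] at hdist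
  exact (hFε N).not_gt hdist

end Subseries

section MultiplierBound

variable {ι : Type*}

theorem Finset.sum_abs_le_two_mul_of_forall_subset {a : ι → ℝ} {s : Finset ι} {δ : ℝ}
    (h : ∀ u ⊆ s, |∑ i ∈ u, a i| ≤ δ) : ∑ i ∈ s, |a i| ≤ 2 * δ := by
  have hpos : ∑ i ∈ s with 0 ≤ a i, |a i| ≤ δ := by
    rw [sum_congr rfl fun i hi => abs_of_nonneg (mem_filter.mp hi).2]
    exact (le_abs_self _).trans (h _ (filter_subset _ _))
  have hneg : ∑ i ∈ s with ¬0 ≤ a i, |a i| ≤ δ := by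
    rw [sum_congr rfl fun i hi => abs_of_neg (not_le.mp (mem_filter.mp hi).2), sum_neg_distrib]
    exact (neg_le_abs _).trans (h _ (filter_subset _ _))
  rw [← sum_filter_add_sum_filter_not s (fun i => 0 ≤ a i)]
  linarith

variable {E : Type*} [SeminormedAddCommGroup E] [NormedSpace ℝ E]

theorem norm_sum_smul_le_of_forall_subset {x : ι → E} {t : ι → ℝ} {s : Finset ι} {C δ : ℝ}
    (hC : 0 ≤ C) (ht : ∀ i ∈ s, |t i| ≤ C) (h : ∀ u ⊆ s, ‖∑ i ∈ u, x i‖ ≤ δ) :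
    ‖∑ i ∈ s, t i • x i‖ ≤ 2 * C * δ := by
  obtain ⟨g, hg, hgv⟩ := exists_dual_vector'' ℝ (∑ i ∈ s, t i • x i)
  have hgx : ∀ u ⊆ s, |∑ i ∈ u, g (x i)| ≤ δ := fun u hu => by
    rw [← map_sum, ← Real.norm_eq_abs]
    exact (g.le_of_opNorm_le hg _).trans (by simpa using h u hu)
  calc ‖∑ i ∈ s, t i • x i‖ = g (∑ i ∈ s, t i • x i) := hgv.symm
    _ = ∑ i ∈ s, t i * g (x i) := by simp
    _ ≤ ∑ i ∈ s, C * |g (x i)| := sum_le_sum fun i hi =>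
        (le_abs_self _).trans (by rw [abs_mul]; gcongr; exact ht i hi)
    _ ≤ C * (2 * δ) := by rw [← mul_sum]; gcongr; exact sum_abs_le_two_mul_of_forall_subset hgx
    _ = 2 * C * δ := by ring

theorem CauchySeq.finset_sum_smul_of_abs_le {x : ι → E}
    (hx : CauchySeq fun s : Finset ι => ∑ i ∈ s, x i) {t : ι → ℝ} {C : ℝ} (ht : ∀ i, |t i| ≤ C) :
    CauchySeq fun s : Finset ι => ∑ i ∈ s, t i • x i := by
  rw [cauchySeq_finset_iff_vanishing_norm] at hx ⊢
  intro ε hε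
  obtain ⟨s, hs⟩ := hx (ε / (2 * (|C| + 1))) (by positivity)
  refine ⟨s, fun u hu => ?_⟩
  calc ‖∑ i ∈ u, t i • x i‖ ≤ 2 * |C| * (ε / (2 * (|C| + 1))) :=
        norm_sum_smul_le_of_forall_subset (abs_nonneg C) (fun i _ => (ht i).trans (le_abs_self C))
          fun v hv => (hs v (disjoint_of_subset_left hv hu)).le
    _ < ε := by
        rw [← mul_div_assoc, div_lt_iff₀ (by positivity)]
        nlinarith [abs_nonneg C]

theorem cauchySeq_sum_range_smul_of_subseries {x : ℕ → E}
    (hx : ∀ m : ℕ → ℕ, StrictMono m → CauchySeq fun n => ∑ k ∈ range n, x (m k))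
    {t : ℕ → ℝ} {C : ℝ} (ht : ∀ k, |t k| ≤ C) :
    CauchySeq fun n => ∑ k ∈ range n, t k • x k :=
  ((cauchySeq_finset_of_subseries hx).finset_sum_smul_of_abs_le ht).comp_tendsto
    tendsto_finset_range

end MultiplierBound

/-- In a Banach space `X`, a series is subseries convergent iff it is
`ℓ∞`-multiplier convergent; moreover, in a general normed space `Z`, subseries
convergence implies that the series is `ℓ∞`-multiplier Cauchy. -/
theorem subseries_convergent_iff_linfty_multiplier
    {X Z : Type*} [NormedAddCommGroup X] [NormedSpace ℝ X] [CompleteSpace X]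
    [NormedAddCommGroup Z] [NormedSpace ℝ Z] :
    (∀ x : ℕ → X,
      ((∀ m : ℕ → ℕ, StrictMono m → ∃ y : X,
          Tendsto (fun n => ∑ k ∈ Finset.range n, x (m k)) atTop (𝓝 y)) ↔
       (∀ t : ℕ → ℝ, (∃ C : ℝ, ∀ k, |t k| ≤ C) → ∃ y : X,
          Tendsto (fun n => ∑ k ∈ Finset.range n, t k • x k) atTop (𝓝 y)))) ∧
    (∀ z : ℕ → Z,
      (∀ m : ℕ → ℕ, StrictMono m → ∃ y : Z,
          Tendsto (fun n => ∑ k ∈ Finset.range n, z (m k)) atTop (𝓝 y)) →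
      ∀ t : ℕ → ℝ, (∃ C : ℝ, ∀ k, |t k| ≤ C) →
        CauchySeq (fun n => ∑ k ∈ Finset.range n, t k • z k)) := by
  refine ⟨fun x => ⟨fun hx t ⟨C, hC⟩ => ?_, fun hx m hm => ?_⟩, fun z hz t ⟨C, hC⟩ => ?_⟩
  · exact cauchySeq_tendsto_of_complete <| cauchySeq_sum_range_smul_of_subseries
      (fun m hm => (hx m hm).elim fun _ hy => hy.cauchySeq) hC
  · obtain ⟨y, hy⟩ := hx ((Set.range m).indicator 1)
      ⟨1, fun k => by by_cases hk : k ∈ Set.range m <;> simp [hk]⟩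
    have hsub := hy.comp hm.tendsto_atTop
    simp only [Function.comp_def, ← Set.indicator_smul_apply_left, Pi.one_apply, one_smul,
      hm.sum_range_indicator_range_eq x] at hsub
    exact ⟨y, hsub⟩
  · exact cauchySeq_sum_range_smul_of_subseries
      (fun m hm => (hz m hm).elim fun _ hy => hy.cauchySeq) hC
end
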